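/- arXiv:2411.13939 — 2 statements merged into one kernel-verified Lean document; each statement's English description precedes it below -/
import Mathlib

section
/- Let J be a measurable set, c ∈ (0, 1], and let 𝒫 be a linear transformation on a space of integrable functions such that 𝒫(𝒱₀(J)) ⊆ 𝒱_c(J). Then for all φ, ψ ∈ 𝒱₀(J), Θ₀(𝒫φ, 𝒫ψ) ≤ λ·Θ₀(φ, ψ), where λ = 1 − e^{−D} ∈ [0, 1) and D is the Θ₀-diameter of 𝒫𝒱₀(J) in 𝒱₀(J); in particular one may take λ ≤ 1 − c². -/
open MeasureTheory Set
open scoped ENNReal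

noncomputable section

/-- The cone `𝒱₀(J)` of integrable nonnegative functions on `J`. -/
def V0 (J : Set ℝ) : Set (ℝ → ℝ) :=
  {φ | IntegrableOn φ J ∧ ∀ x ∈ J, 0 ≤ φ x}

/-- The cone `𝒱_c(J)` of integrable positive functions on `J` with
`c < φ(x)/φ(y) < c⁻¹` for all `x, y ∈ J`. -/
def Vc (J : Set ℝ) (c : ℝ) : Set (ℝ → ℝ) :=
  {φ | IntegrableOn φ J ∧ (∀ x ∈ J, 0 < φ x) ∧
    ∀ x ∈ J, ∀ y ∈ J, c < φ x / φ y ∧ φ x / φ y < c⁻¹}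

/-- `β₀(φ, ψ) = inf {t > 0 : t φ − ψ ∈ 𝒱₀(J)} ∈ (0, +∞]` (with `inf ∅ = +∞`). -/
def beta0 (J : Set ℝ) (φ ψ : ℝ → ℝ) : ℝ≥0∞ :=
  sInf (ENNReal.ofReal '' {t : ℝ | 0 < t ∧ (t • φ - ψ) ∈ V0 J})

/-- The extended Hilbert projective metric of the cone `𝒱₀(J)`. -/
def Theta0 (J : Set ℝ) (φ ψ : ℝ → ℝ) : EReal :=
  ENNReal.log (beta0 J φ ψ * beta0 J ψ φ)

/-- The `Θ₀`-diameter of the image `𝒫(𝒱₀(J) ∖ {0})` inside `𝒱₀(J)`. -/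
def imageDiam (J : Set ℝ) (P : (ℝ → ℝ) →ₗ[ℝ] (ℝ → ℝ)) : EReal :=
  sSup {d : EReal | ∃ φ ∈ V0 J, (∃ x ∈ J, φ x ≠ 0) ∧
    ∃ ψ ∈ V0 J, (∃ x ∈ J, ψ x ≠ 0) ∧ d = Theta0 J (P φ) (P ψ)}


/-- Bernoulli-type: for `0 ≤ x ≤ y`, `x * log (1+y) ≤ y * log (1+x)`. -/
lemma log_one_add_bernoulli {x y : ℝ} (hx : 0 ≤ x) (hxy : x ≤ y) :
    x * Real.log (1 + y) ≤ y * Real.log (1 + x) := by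
  rcases eq_or_lt_of_le hx with h0 | hxpos
  · subst h0; simp
  · have hp : 1 ≤ y / x := (one_le_div hxpos).2 hxy
    have hb := one_add_mul_self_le_rpow_one_add (by linarith : (-1:ℝ) ≤ x) hp
    have hyx : 1 + (y / x) * x = 1 + y := by field_simp
    rw [hyx] at hb
    have h1x : (0:ℝ) < 1 + x := by linarith
    have hlog := Real.log_le_log (by linarith : (0:ℝ) < 1 + y) hb
    rw [Real.log_rpow h1x] at hlog
    have := mul_le_mul_of_nonneg_left hlog hxpos.le
    calc x * Real.log (1 + y) ≤ x * (y / x * Real.log (1 + x)) := this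
      _ = y * Real.log (1 + x) := by field_simp

lemma claim_one {R ρ α : ℝ} (hR : 1 ≤ R) (hρ : 1 ≤ ρ) (hα : 0 ≤ α) :
    Real.log (R*(1+α)/(1+α*R)) ≤ ρ * Real.log (R*(1+ρ*α)/(1+ρ*α*R)) := by
  have hρα : 0 ≤ ρ * α := by positivity
  have h1 : (0:ℝ) < 1 + α * R := by nlinarith
  have h2 : (0:ℝ) < 1 + ρ * α * R := by nlinarith
  set x := (R - 1) / (1 + ρ*α*R) with hxdef
  set y := (R - 1) / (1 + α*R) with hydef
  have hx0 : 0 ≤ x := by apply div_nonneg (by linarith) h2.le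
  have hy0 : 0 ≤ y := by apply div_nonneg (by linarith) h1.le
  have hxy : x ≤ y := by
    apply div_le_div_of_nonneg_left (by linarith) h1
    nlinarith [mul_nonneg (by linarith : (0:ℝ) ≤ ρ - 1) (mul_nonneg hα (by linarith : (0:ℝ) ≤ R))]
  have hex : 1 + x = R*(1+ρ*α)/(1+ρ*α*R) := by
    rw [hxdef, add_div' _ _ _ h2.ne']
    congr 1; ring
  have hey : 1 + y = R*(1+α)/(1+α*R) := by
    rw [hydef, add_div' _ _ _ h1.ne']
    congr 1; ring
  have key := log_one_add_bernoulli hx0 hxy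
  have hρx : y ≤ ρ * x := by
    rw [hxdef, hydef, mul_div_assoc', div_le_div_iff₀ h1 h2]
    nlinarith [mul_nonneg (by linarith : (0:ℝ) ≤ R - 1) (by linarith : (0:ℝ) ≤ ρ - 1)]
  rw [← hex, ← hey]
  rcases eq_or_lt_of_le hx0 with h0 | hxpos
  · have hy0' : y = 0 := by
      have : ρ * x = 0 := by rw [← h0]; ring
      linarith [hρx, hy0]
    rw [← h0, hy0']; simp
  · have hlx : 0 ≤ Real.log (1 + x) := by
      apply Real.log_nonneg; linarith
    have : x * Real.log (1 + y) ≤ x * (ρ * Real.log (1 + x)) := by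
      calc x * Real.log (1 + y) ≤ y * Real.log (1 + x) := key
        _ ≤ ρ * x * Real.log (1 + x) := by nlinarith
        _ = x * (ρ * Real.log (1 + x)) := by ring
    exact le_of_mul_le_mul_left this hxpos

lemma analytic_main {R ρ α β : ℝ} (hR : 1 ≤ R) (hρ : 1 ≤ ρ) (hα : 0 < α) (hβ : 0 < β)
    (hβα : β ≤ ρ * α) :
    Real.log ((1+β*R)*(1+α)/((1+β)*(1+α*R))) ≤ (1 - ρ⁻¹) * Real.log R := by
  have hR0 : (0:ℝ) < R := by linarith
  have h1 : (0:ℝ) < 1 + α * R := by nlinarith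
  have h2 : (0:ℝ) < 1 + ρ * α * R := by nlinarith
  have h3 : (0:ℝ) < 1 + β := by linarith
  have h4 : (0:ℝ) < 1 + ρ * α := by nlinarith
  have h5 : (0:ℝ) < 1 + α := by linarith
  have h6 : (0:ℝ) < 1 + β * R := by nlinarith
  -- monotonicity in β: replace β by ρ * α
  have hmono : (1+β*R)*(1+α)/((1+β)*(1+α*R)) ≤ (1+ρ*α*R)*(1+α)/((1+ρ*α)*(1+α*R)) := by
    rw [div_le_div_iff₀ (by positivity) (by positivity)]
    have : (1+β*R)*(1+ρ*α) ≤ (1+ρ*α*R)*(1+β) := by nlinarith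
    nlinarith [mul_le_mul_of_nonneg_right this (mul_pos h5 h1).le]
  have hlog1 : Real.log ((1+β*R)*(1+α)/((1+β)*(1+α*R)))
      ≤ Real.log ((1+ρ*α*R)*(1+α)/((1+ρ*α)*(1+α*R))) :=
    Real.log_le_log (by positivity) hmono
  -- rewrite as L(α) - L(ρα)
  have hid : (1+ρ*α*R)*(1+α)/((1+ρ*α)*(1+α*R))
      = (R*(1+α)/(1+α*R)) / (R*(1+ρ*α)/(1+ρ*α*R)) := by
    field_simp
  set Lα := Real.log (R*(1+α)/(1+α*R)) with hLα
  set Lρ := Real.log (R*(1+ρ*α)/(1+ρ*α*R)) with hLρ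
  have hsplit : Real.log ((1+ρ*α*R)*(1+α)/((1+ρ*α)*(1+α*R))) = Lα - Lρ := by
    rw [hid, Real.log_div (by positivity) (by positivity)]
  have hc1 : Lα ≤ ρ * Lρ := claim_one hR hρ hα.le
  have hLαR : Lα ≤ Real.log R := by
    apply Real.log_le_log (by positivity)
    rw [div_le_iff₀ h1]
    nlinarith [mul_nonneg (mul_nonneg (by linarith : (0:ℝ) ≤ R) hα.le) (by linarith : (0:ℝ) ≤ R - 1)]
  have hLρ0 : 0 ≤ Lρ := by
    apply Real.log_nonneg; rw [le_div_iff₀ h2]; nlinarith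
  have hlogR0 : 0 ≤ Real.log R := Real.log_nonneg hR
  have hρ0 : (0:ℝ) < ρ := by linarith
  have hinv : ρ⁻¹ * Lα ≤ Lρ := by
    rw [inv_mul_le_iff₀ hρ0]; linarith [hc1]
  have hfac : 0 ≤ 1 - ρ⁻¹ := by
    have : ρ⁻¹ ≤ 1 := inv_le_one_of_one_le₀ hρ; linarith
  calc Real.log ((1+β*R)*(1+α)/((1+β)*(1+α*R))) ≤ Lα - Lρ := by rw [← hsplit]; exact hlog1
    _ ≤ Lα - ρ⁻¹ * Lα := by linarith
    _ = (1 - ρ⁻¹) * Lα := by ring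
    _ ≤ (1 - ρ⁻¹) * Real.log R := mul_le_mul_of_nonneg_left hLαR hfac


lemma smul_sub_apply (t : ℝ) (f g : ℝ → ℝ) (x : ℝ) :
    (t • f - g) x = t * f x - g x := rfl

/-- Upper bound on `beta0` from a pointwise witness. -/
lemma beta0_le {J : Set ℝ} {f g : ℝ → ℝ} {t : ℝ} (ht : 0 < t)
    (hint : IntegrableOn (t • f - g) J) (hpt : ∀ x ∈ J, g x ≤ t * f x) :
    beta0 J f g ≤ ENNReal.ofReal t := by
  apply sInf_le
  exact ⟨t, ⟨ht, hint, fun x hx => by rw [smul_sub_apply]; linarith [hpt x hx]⟩, rfl⟩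

/-- Lower bound on `beta0` from a point where `f` is positive. -/
lemma le_beta0 {J : Set ℝ} {f g : ℝ → ℝ} {x : ℝ} (hx : x ∈ J) (hfx : 0 < f x) :
    ENNReal.ofReal (g x / f x) ≤ beta0 J f g := by
  apply le_sInf
  rintro _ ⟨t, ⟨ht, _, hnn⟩, rfl⟩
  apply ENNReal.ofReal_le_ofReal
  rw [div_le_iff₀ hfx]
  have := hnn x hx
  rw [smul_sub_apply] at this
  linarith

/-- `beta0 J φ ψ` is positive provided `ψ` is nonnegative on `J` and nonzero at a point of `J`. -/
lemma beta0_pos {J : Set ℝ} {φ ψ : ℝ → ℝ} {x₁ : ℝ} (hx₁ : x₁ ∈ J)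
    (hψ0 : ∀ x ∈ J, 0 ≤ ψ x) (hψx : ψ x₁ ≠ 0) : 0 < beta0 J φ ψ := by
  have hψpos : 0 < ψ x₁ := lt_of_le_of_ne (hψ0 x₁ hx₁) (Ne.symm hψx)
  by_cases hS : {t : ℝ | 0 < t ∧ (t • φ - ψ) ∈ V0 J}.Nonempty
  · obtain ⟨t₀, ht₀, _, hnn⟩ := hS
    have h0 := hnn x₁ hx₁
    rw [smul_sub_apply] at h0
    have hφpos : 0 < φ x₁ := by nlinarith
    calc (0:ℝ≥0∞) < ENNReal.ofReal (ψ x₁ / φ x₁) := by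
          rw [ENNReal.ofReal_pos]; positivity
      _ ≤ beta0 J φ ψ := le_beta0 hx₁ hφpos
  · rw [Set.not_nonempty_iff_eq_empty] at hS
    rw [beta0, hS, Set.image_empty, sInf_empty]
    exact ENNReal.zero_lt_top

/-- If `beta0 J φ ψ` is finite then it is attained. -/
lemma beta0_attained {J : Set ℝ} {φ ψ : ℝ → ℝ} (hφ : IntegrableOn φ J)
    (hψ : IntegrableOn ψ J) (hψ0 : ∀ x ∈ J, 0 ≤ ψ x)
    (hfin : beta0 J φ ψ ≠ ⊤) :
    ((beta0 J φ ψ).toReal • φ - ψ) ∈ V0 J := by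
  set b := (beta0 J φ ψ).toReal with hb
  have hSne : {t : ℝ | 0 < t ∧ (t • φ - ψ) ∈ V0 J}.Nonempty := by
    by_contra hS
    rw [Set.not_nonempty_iff_eq_empty] at hS
    rw [beta0, hS, Set.image_empty, sInf_empty] at hfin
    exact hfin rfl
  refine ⟨(hφ.smul b).sub hψ, fun x hx => ?_⟩
  rw [smul_sub_apply, sub_nonneg]
  obtain ⟨t₀, ht₀, _, hnn₀⟩ := hSne
  have h₀ := hnn₀ x hx
  rw [smul_sub_apply] at h₀
  rcases le_or_gt (φ x) 0 with h | h
  · -- then φ x = 0 and ψ x = 0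
    have hφx : φ x = 0 := le_antisymm h (by nlinarith [hψ0 x hx])
    have hψx : ψ x = 0 := by nlinarith [hψ0 x hx]
    rw [hφx, hψx, mul_zero]
  · -- φ x > 0 : use the lower bound lemma
    have hle : ENNReal.ofReal (ψ x / φ x) ≤ ENNReal.ofReal b := by
      rw [hb, ENNReal.ofReal_toReal hfin]
      exact le_beta0 hx h
    have : ψ x / φ x ≤ b := by
      rcases le_or_gt (ψ x / φ x) 0 with h' | h'
      · exact h'.trans ENNReal.toReal_nonneg
      · exact (ENNReal.ofReal_le_ofReal_iff ENNReal.toReal_nonneg).1 hle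
    calc ψ x = (ψ x / φ x) * φ x := by field_simp
      _ ≤ b * φ x := mul_le_mul_of_nonneg_right this h.le

/-- Key cross-ratio bound: the `Theta0` distance between two elements of `Vc J c`
is at most `log (c⁻¹ * c⁻¹)`, provided `J` is nonempty. -/
lemma theta0_vc_le {J : Set ℝ} {c : ℝ} {f g : ℝ → ℝ} (hcpos : 0 < c)
    (hf : f ∈ Vc J c) (hg : g ∈ Vc J c) {x₀ : ℝ} (hx₀ : x₀ ∈ J) :
    Theta0 J f g ≤ ((Real.log (c⁻¹ * c⁻¹) : ℝ) : EReal) := by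
  obtain ⟨hfint, hfpos, hfr⟩ := hf
  obtain ⟨hgint, hgpos, hgr⟩ := hg
  set K := c⁻¹ * c⁻¹ with hK
  have hKpos : 0 < K := by positivity
  set S₁ := (fun x => g x / f x) '' J with hS₁
  set S₂ := (fun x => f x / g x) '' J with hS₂
  have hS₁ne : S₁.Nonempty := ⟨_, x₀, hx₀, rfl⟩
  have hS₂ne : S₂.Nonempty := ⟨_, x₀, hx₀, rfl⟩
  have hS₁pos : ∀ p ∈ S₁, 0 < p := by
    rintro _ ⟨x, hx, rfl⟩; exact div_pos (hgpos x hx) (hfpos x hx)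
  have hS₂pos : ∀ q ∈ S₂, 0 < q := by
    rintro _ ⟨x, hx, rfl⟩; exact div_pos (hfpos x hx) (hgpos x hx)
  have hcross : ∀ p ∈ S₁, ∀ q ∈ S₂, p * q ≤ K := by
    rintro _ ⟨x, hx, rfl⟩ _ ⟨y, hy, rfl⟩
    have hid : g x / f x * (f y / g y) = (g x / g y) * (f y / f x) := by
      rw [div_mul_div_comm, div_mul_div_comm]; ring_nf
    rw [hid]
    have h1 := (hgr x hx y hy).2
    have h2 := (hfr y hy x hx).2
    have h1' := (hgr x hx y hy).1
    have h2' := (hfr y hy x hx).1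
    nlinarith [inv_pos.2 hcpos]
  have hbdd₁ : BddAbove S₁ := by
    refine ⟨K / (f x₀ / g x₀), fun p hp => ?_⟩
    have hq : (0:ℝ) < f x₀ / g x₀ := div_pos (hfpos x₀ hx₀) (hgpos x₀ hx₀)
    rw [le_div_iff₀ hq]
    exact hcross p hp _ ⟨x₀, hx₀, rfl⟩
  have hbdd₂ : BddAbove S₂ := by
    refine ⟨K / (g x₀ / f x₀), fun q hq' => ?_⟩
    have hq : (0:ℝ) < g x₀ / f x₀ := div_pos (hgpos x₀ hx₀) (hfpos x₀ hx₀)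
    rw [le_div_iff₀ hq]
    rw [mul_comm]
    exact hcross _ ⟨x₀, hx₀, rfl⟩ _ hq'
  set m₁ := sSup S₁ with hm₁
  set m₂ := sSup S₂ with hm₂
  have hm₁pos : 0 < m₁ :=
    lt_of_lt_of_le (hS₁pos _ ⟨x₀, hx₀, rfl⟩) (le_csSup hbdd₁ ⟨x₀, hx₀, rfl⟩)
  have hm₂pos : 0 < m₂ :=
    lt_of_lt_of_le (hS₂pos _ ⟨x₀, hx₀, rfl⟩) (le_csSup hbdd₂ ⟨x₀, hx₀, rfl⟩)
  have hβ₁ : beta0 J f g ≤ ENNReal.ofReal m₁ := by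
    apply beta0_le hm₁pos ((hfint.smul m₁).sub hgint)
    intro x hx
    have := le_csSup hbdd₁ (⟨x, hx, rfl⟩ : g x / f x ∈ S₁)
    rw [div_le_iff₀ (hfpos x hx)] at this
    linarith
  have hβ₂ : beta0 J g f ≤ ENNReal.ofReal m₂ := by
    apply beta0_le hm₂pos ((hgint.smul m₂).sub hfint)
    intro x hx
    have := le_csSup hbdd₂ (⟨x, hx, rfl⟩ : f x / g x ∈ S₂)
    rw [div_le_iff₀ (hgpos x hx)] at this
    linarith
  have hmm : m₁ * m₂ ≤ K := by
    have h1 : ∀ q ∈ S₂, m₁ ≤ K / q := fun q hq =>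
      csSup_le hS₁ne fun p hp => (le_div_iff₀ (hS₂pos q hq)).2 (hcross p hp q hq)
    have h2 : m₂ ≤ K / m₁ :=
      csSup_le hS₂ne fun q hq => by
        have := h1 q hq
        rw [le_div_iff₀ (hS₂pos q hq)] at this
        rw [le_div_iff₀ hm₁pos]
        nlinarith
    rw [le_div_iff₀ hm₁pos] at h2
    nlinarith
  calc Theta0 J f g ≤ ENNReal.log (ENNReal.ofReal m₁ * ENNReal.ofReal m₂) :=
        ENNReal.log_monotone (mul_le_mul' hβ₁ hβ₂)
    _ = ENNReal.log (ENNReal.ofReal (m₁ * m₂)) := by rw [ENNReal.ofReal_mul hm₁pos.le]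
    _ ≤ ENNReal.log (ENNReal.ofReal K) :=
        ENNReal.log_monotone (ENNReal.ofReal_le_ofReal hmm)
    _ = ((Real.log K : ℝ) : EReal) := ENNReal.log_ofReal_of_pos hKpos

/-- `Theta0` is nonnegative on `Vc J c` pairs. -/
lemma theta0_vc_nonneg {J : Set ℝ} {c : ℝ} {f g : ℝ → ℝ}
    (hf : f ∈ Vc J c) (hg : g ∈ Vc J c) {x₀ : ℝ} (hx₀ : x₀ ∈ J) :
    (0 : EReal) ≤ Theta0 J f g := by
  have hfpos := hf.2.1 x₀ hx₀
  have hgpos := hg.2.1 x₀ hx₀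
  have h₁ : ENNReal.ofReal (g x₀ / f x₀) ≤ beta0 J f g := le_beta0 hx₀ hfpos
  have h₂ : ENNReal.ofReal (f x₀ / g x₀) ≤ beta0 J g f := le_beta0 hx₀ hgpos
  have hone : (1 : ℝ≥0∞) ≤ beta0 J f g * beta0 J g f := by
    calc (1:ℝ≥0∞) = ENNReal.ofReal (g x₀ / f x₀ * (f x₀ / g x₀)) := by
          rw [show g x₀ / f x₀ * (f x₀ / g x₀) = 1 by field_simp]
          simp
      _ = ENNReal.ofReal (g x₀ / f x₀) * ENNReal.ofReal (f x₀ / g x₀) :=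
          ENNReal.ofReal_mul (by positivity)
      _ ≤ beta0 J f g * beta0 J g f := mul_le_mul' h₁ h₂
  calc (0 : EReal) = ENNReal.log 1 := ENNReal.log_one.symm
    _ ≤ Theta0 J f g := ENNReal.log_monotone hone

/-- A linear map satisfying the hypothesis sends functions vanishing on `J`
to functions vanishing on `J` (provided some element of `V0 J` is nonzero on `J`). -/
lemma P_vanish {J : Set ℝ} (hJ : MeasurableSet J) {c : ℝ}
    {P : (ℝ → ℝ) →ₗ[ℝ] (ℝ → ℝ)}
    (hP : ∀ φ ∈ V0 J, (∃ x ∈ J, φ x ≠ 0) → P φ ∈ Vc J c)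
    {χ φ₀ : ℝ → ℝ} (hχ : ∀ x ∈ J, χ x = 0)
    (hφ₀ : φ₀ ∈ V0 J) (hφ₀n : ∃ x ∈ J, φ₀ x ≠ 0) :
    ∀ x ∈ J, P χ x = 0 := by
  have hχint : IntegrableOn χ J := by
    apply Integrable.congr (integrable_zero _ _ _)
    filter_upwards [ae_restrict_mem hJ] with x hx
    exact (hχ x hx).symm
  intro x hx
  by_contra hne
  set t := -(P φ₀ x) / (P χ x) with ht
  have hmem : φ₀ + t • χ ∈ V0 J := by
    refine ⟨hφ₀.1.add (hχint.smul t), fun y hy => ?_⟩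
    have : (φ₀ + t • χ) y = φ₀ y + t * χ y := rfl
    rw [this, hχ y hy, mul_zero, add_zero]
    exact hφ₀.2 y hy
  have hmemn : ∃ y ∈ J, (φ₀ + t • χ) y ≠ 0 := by
    obtain ⟨y, hy, hyn⟩ := hφ₀n
    refine ⟨y, hy, ?_⟩
    have : (φ₀ + t • χ) y = φ₀ y + t * χ y := rfl
    rw [this, hχ y hy, mul_zero, add_zero]
    exact hyn
  have hpos := (hP _ hmem hmemn).2.1 x hx
  have heq : P (φ₀ + t • χ) x = P φ₀ x + t * P χ x := by
    rw [map_add, LinearMap.map_smul]; rfl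
  rw [heq, ht] at hpos
  rw [div_mul_cancel₀ _ hne] at hpos
  linarith

/-- Degenerate case: if `ψ = r φ` on `J` then `Theta0 J (P φ) (P ψ) ≤ 0`. -/
lemma theta0_P_le_zero {J : Set ℝ} (hJ : MeasurableSet J) {c : ℝ}
    {P : (ℝ → ℝ) →ₗ[ℝ] (ℝ → ℝ)}
    (hP : ∀ φ ∈ V0 J, (∃ x ∈ J, φ x ≠ 0) → P φ ∈ Vc J c)
    {φ ψ : ℝ → ℝ} (hφ : φ ∈ V0 J) (hφn : ∃ x ∈ J, φ x ≠ 0)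
    (hψ : ψ ∈ V0 J) (hψn : ∃ x ∈ J, ψ x ≠ 0)
    {r : ℝ} (hr : 0 < r) (heq : ∀ x ∈ J, ψ x = r * φ x) :
    Theta0 J (P φ) (P ψ) ≤ 0 := by
  have hvan : ∀ x ∈ J, P (ψ - r • φ) x = 0 := by
    apply P_vanish hJ hP (fun x hx => ?_) hφ hφn
    have : (ψ - r • φ) x = ψ x - r * φ x := rfl
    rw [this, heq x hx]; ring
  have hPeq : ∀ x ∈ J, P ψ x = r * P φ x := by
    intro x hx
    have h1 := hvan x hx
    have h2 : P (ψ - r • φ) x = P ψ x - r * P φ x := by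
      rw [map_sub, LinearMap.map_smul]; rfl
    rw [h2] at h1; linarith
  have hPφ := hP φ hφ hφn
  have hPψ := hP ψ hψ hψn
  have hβ₁ : beta0 J (P φ) (P ψ) ≤ ENNReal.ofReal r :=
    beta0_le hr ((hPφ.1.smul r).sub hPψ.1)
      (fun x hx => by rw [hPeq x hx])
  have hβ₂ : beta0 J (P ψ) (P φ) ≤ ENNReal.ofReal r⁻¹ :=
    beta0_le (inv_pos.2 hr) ((hPψ.1.smul r⁻¹).sub hPφ.1)
      (fun x hx => by rw [hPeq x hx, inv_mul_cancel_left₀ hr.ne'])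
  calc Theta0 J (P φ) (P ψ)
      ≤ ENNReal.log (ENNReal.ofReal r * ENNReal.ofReal r⁻¹) :=
        ENNReal.log_monotone (mul_le_mul' hβ₁ hβ₂)
    _ = ENNReal.log (ENNReal.ofReal (r * r⁻¹)) := by rw [ENNReal.ofReal_mul hr.le]
    _ = 0 := by rw [mul_inv_cancel₀ hr.ne', ENNReal.ofReal_one, ENNReal.log_one]


/-- Combination of the two analytic lemmas in the variables used in the main proof. -/
lemma pq_log_bound {a b A B ρ : ℝ} (ha : 0 < a) (hb : 0 < b) (hA : 0 < A) (hB : 0 < B)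
    (hρ : 1 ≤ ρ) (hab : a ≤ b) (hAB : B * A ≤ ρ) :
    Real.log ((a + A * b) / (1 + A) * ((1 + B) / (b + a * B)))
      ≤ (1 - ρ⁻¹) * Real.log (b / a) := by
  have hR1 : 1 ≤ b / a := (one_le_div ha).2 hab
  have hα : 0 < B⁻¹ := inv_pos.2 hB
  have hβα : A ≤ ρ * B⁻¹ := by
    rw [show ρ * B⁻¹ = ρ / B from (div_eq_mul_inv ρ B).symm, le_div_iff₀ hB]
    nlinarith
  have han := analytic_main hR1 hρ hα hA hβα
  have h1A : (0:ℝ) < 1 + A := by linarith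
  have h1B : (0:ℝ) < b + a * B := by positivity
  have h2B : (0:ℝ) < 1 + B⁻¹ * (b / a) := by positivity
  have hid : (a + A * b) / (1 + A) * ((1 + B) / (b + a * B))
      = (1 + A * (b / a)) * (1 + B⁻¹) / ((1 + A) * (1 + B⁻¹ * (b / a))) := by
    field_simp
    ring
  rw [hid]
  exact han

/-- `Theta0` upper bound from a two-sided pointwise sandwich. -/
lemma theta0_le_of_sandwich {J : Set ℝ} {f g : ℝ → ℝ} {p q : ℝ}
    (hf : IntegrableOn f J) (hg : IntegrableOn g J) (hp : 0 < p) (hq : 0 < q)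
    (h1 : ∀ x ∈ J, g x ≤ p * f x) (h2 : ∀ x ∈ J, f x ≤ q * g x) :
    Theta0 J f g ≤ ((Real.log (p * q) : ℝ) : EReal) := by
  have hβ₁ : beta0 J f g ≤ ENNReal.ofReal p := beta0_le hp ((hf.smul p).sub hg) h1
  have hβ₂ : beta0 J g f ≤ ENNReal.ofReal q := beta0_le hq ((hg.smul q).sub hf) h2
  calc Theta0 J f g
      ≤ ENNReal.log (ENNReal.ofReal p * ENNReal.ofReal q) :=
        ENNReal.log_monotone (mul_le_mul' hβ₁ hβ₂)
    _ = ENNReal.log (ENNReal.ofReal (p * q)) := by rw [ENNReal.ofReal_mul hp.le]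
    _ = ((Real.log (p * q) : ℝ) : EReal) := ENNReal.log_ofReal_of_pos (by positivity)

/-- If `beta0 J φ ψ` and `beta0 J ψ φ` are finite and positive, `Theta0` is the
logarithm of the product of their `toReal`s. -/
lemma theta0_eq_coe {J : Set ℝ} {φ ψ : ℝ → ℝ}
    (h₁pos : 0 < beta0 J φ ψ) (h₂pos : 0 < beta0 J ψ φ)
    (h₁top : beta0 J φ ψ ≠ ⊤) (h₂top : beta0 J ψ φ ≠ ⊤) :
    Theta0 J φ ψ
      = ((Real.log ((beta0 J φ ψ).toReal * (beta0 J ψ φ).toReal) : ℝ) : EReal) := by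
  have hb : 0 < (beta0 J φ ψ).toReal := ENNReal.toReal_pos h₁pos.ne' h₁top
  have hs : 0 < (beta0 J ψ φ).toReal := ENNReal.toReal_pos h₂pos.ne' h₂top
  have e1 : beta0 J φ ψ * beta0 J ψ φ
      = ENNReal.ofReal ((beta0 J φ ψ).toReal * (beta0 J ψ φ).toReal) := by
    rw [ENNReal.ofReal_mul hb.le, ENNReal.ofReal_toReal h₁top, ENNReal.ofReal_toReal h₂top]
  rw [Theta0, e1]
  exact ENNReal.log_ofReal_of_pos (by positivity)

/-- if a linear transformation `𝒫` maps (the nonzero part of)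
`𝒱₀(J)` into `𝒱_c(J)`, then `𝒫` contracts the Hilbert metric `Θ₀` with rate
`λ = 1 − e^{−D} ∈ [0,1)`, where `D` is the `Θ₀`-diameter of `𝒫(𝒱₀(J))` in
`𝒱₀(J)`; in particular one may take `λ ≤ 1 − c²`. -/
theorem birkhoff_contraction (J : Set ℝ) (hJ : MeasurableSet J) (c : ℝ)
    (hc : c ∈ Set.Ioc (0:ℝ) 1)
    (P : (ℝ → ℝ) →ₗ[ℝ] (ℝ → ℝ))
    (hP : ∀ φ ∈ V0 J, (∃ x ∈ J, φ x ≠ 0) → P φ ∈ Vc J c) :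
    (1 - Real.exp (-(imageDiam J P).toReal)) ∈ Set.Ico (0:ℝ) 1 ∧
    (1 - Real.exp (-(imageDiam J P).toReal)) ≤ 1 - c ^ 2 ∧
    ∀ φ ∈ V0 J, (∃ x ∈ J, φ x ≠ 0) → ∀ ψ ∈ V0 J, (∃ x ∈ J, ψ x ≠ 0) →
      Theta0 J (P φ) (P ψ)
        ≤ ((1 - Real.exp (-(imageDiam J P).toReal) : ℝ) : EReal) * Theta0 J φ ψ := by
  obtain ⟨hcpos, hc1⟩ := hc
  set DS := {d : EReal | ∃ φ ∈ V0 J, (∃ x ∈ J, φ x ≠ 0) ∧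
    ∃ ψ ∈ V0 J, (∃ x ∈ J, ψ x ≠ 0) ∧ d = Theta0 J (P φ) (P ψ)} with hDS
  have hDSdef : imageDiam J P = sSup DS := rfl
  have hub : ∀ d ∈ DS, d ≤ ((Real.log (c⁻¹ * c⁻¹) : ℝ) : EReal) := by
    rintro d ⟨φ, hφ, hφn, ψ, hψ, hψn, rfl⟩
    have hφn' := hφn
    obtain ⟨x₀, hx₀, -⟩ := hφn'
    exact theta0_vc_le hcpos (hP φ hφ hφn) (hP ψ hψ hψn) hx₀
  have hlb : ∀ d ∈ DS, (0 : EReal) ≤ d := by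
    rintro d ⟨φ, hφ, hφn, ψ, hψ, hψn, rfl⟩
    have hφn' := hφn
    obtain ⟨x₀, hx₀, -⟩ := hφn'
    exact theta0_vc_nonneg (hP φ hφ hφn) (hP ψ hψ hψn) hx₀
  have hcsq : c ^ 2 ≤ 1 := by nlinarith
  by_cases hne : DS.Nonempty
  · have hDub : imageDiam J P ≤ ((Real.log (c⁻¹ * c⁻¹) : ℝ) : EReal) :=
      hDSdef ▸ sSup_le hub
    have hDlb : (0 : EReal) ≤ imageDiam J P := by
      obtain ⟨d₀, hd₀⟩ := hne
      exact le_trans (hlb d₀ hd₀) (hDSdef ▸ le_sSup hd₀)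
    have hDnetop : imageDiam J P ≠ ⊤ :=
      fun h => by rw [h] at hDub; exact (EReal.coe_lt_top _).not_ge hDub
    have hDnebot : imageDiam J P ≠ ⊥ := by
      have hbot : (⊥ : EReal) < imageDiam J P := lt_of_lt_of_le (by simp) hDlb
      exact hbot.ne'
    set DR := (imageDiam J P).toReal with hDRdef
    have hDcoe : ((DR : ℝ) : EReal) = imageDiam J P := EReal.coe_toReal hDnetop hDnebot
    have hDR0 : 0 ≤ DR := EReal.coe_nonneg.1 (hDcoe ▸ hDlb)
    have hDRle : DR ≤ Real.log (c⁻¹ * c⁻¹) := EReal.coe_le_coe_iff.1 (hDcoe ▸ hDub)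
    set lam := 1 - Real.exp (-DR) with hlamdef
    have hexp1 : Real.exp (-DR) ≤ 1 := by
      have := Real.exp_le_exp.2 (by linarith : -DR ≤ 0)
      rwa [Real.exp_zero] at this
    have hlam0 : 0 ≤ lam := by rw [hlamdef]; linarith
    have hlamlt : lam < 1 := by
      have := Real.exp_pos (-DR); rw [hlamdef]; linarith
    have hρ1 : 1 ≤ Real.exp DR := Real.one_le_exp hDR0
    have hlaminv : lam = 1 - (Real.exp DR)⁻¹ := by rw [hlamdef, Real.exp_neg]
    refine ⟨⟨hlam0, hlamlt⟩, ?_, ?_⟩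
    · have hlogid : Real.log (c⁻¹ * c⁻¹) = -Real.log (c * c) := by
        rw [← mul_inv, Real.log_inv]
      have h1 : Real.log (c * c) ≤ -DR := by rw [hlogid] at hDRle; linarith
      have h2 : c * c ≤ Real.exp (-DR) := by
        have := Real.exp_le_exp.2 h1
        rwa [Real.exp_log (by positivity : (0:ℝ) < c * c)] at this
      have h3 : c ^ 2 = c * c := sq c
      rw [hlamdef]; linarith
    · intro φ hφ hφn ψ hψ hψn
      have hφn' := hφn
      have hψn' := hψn
      obtain ⟨x₀, hx₀, hφx₀ne⟩ := hφn'
      obtain ⟨x₁, hx₁, hψx₁ne⟩ := hψn'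
      have hφx₀ : 0 < φ x₀ := lt_of_le_of_ne (hφ.2 x₀ hx₀) (Ne.symm hφx₀ne)
      have hPφ := hP φ hφ hφn
      have hPψ := hP ψ hψ hψn
      have hledi : Theta0 J (P φ) (P ψ) ≤ ((DR : ℝ) : EReal) := by
        rw [hDcoe, hDSdef]
        exact le_sSup ⟨φ, hφ, hφn, ψ, hψ, hψn, rfl⟩
      by_cases htop : beta0 J φ ψ * beta0 J ψ φ = ⊤
      · have hth : Theta0 J φ ψ = ⊤ := by rw [Theta0, htop]; exact ENNReal.log_top
        rw [hth]
        rcases eq_or_lt_of_le hlam0 with h0 | hpos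
        · have hexp : Real.exp (-DR) = 1 := by rw [hlamdef] at h0; linarith
          have hDR0' : DR = 0 := by
            have := (Real.exp_eq_one_iff (-DR)).1 hexp; linarith
          rw [← h0, EReal.coe_zero, zero_mul]
          calc Theta0 J (P φ) (P ψ) ≤ ((DR : ℝ) : EReal) := hledi
            _ = (0 : EReal) := by rw [hDR0']; rfl
        · rw [EReal.mul_top_of_pos (EReal.coe_pos.2 hpos)]
          exact le_top
      · have hβ₁pos : 0 < beta0 J φ ψ := beta0_pos hx₁ hψ.2 hψx₁ne
        have hβ₂pos : 0 < beta0 J ψ φ := beta0_pos hx₀ hφ.2 hφx₀ne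
        have hβ₁top : beta0 J φ ψ ≠ ⊤ :=
          fun h => htop (by rw [h, ENNReal.top_mul hβ₂pos.ne'])
        have hβ₂top : beta0 J ψ φ ≠ ⊤ :=
          fun h => htop (by rw [h, ENNReal.mul_top hβ₁pos.ne'])
        obtain ⟨b, hbdef⟩ : ∃ b : ℝ, b = (beta0 J φ ψ).toReal := ⟨_, rfl⟩
        obtain ⟨s, hsdef⟩ : ∃ s : ℝ, s = (beta0 J ψ φ).toReal := ⟨_, rfl⟩
        have hbpos : 0 < b := hbdef ▸ ENNReal.toReal_pos hβ₁pos.ne' hβ₁top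
        have hspos : 0 < s := hsdef ▸ ENNReal.toReal_pos hβ₂pos.ne' hβ₂top
        have hv : (b • φ - ψ) ∈ V0 J := by
          rw [hbdef]; exact beta0_attained hφ.1 hψ.1 hψ.2 hβ₁top
        have hu' : (s • ψ - φ) ∈ V0 J := by
          rw [hsdef]; exact beta0_attained hψ.1 hφ.1 hφ.2 hβ₂top
        have hbs1 : 1 ≤ b * s := by
          have h1 := hv.2 x₀ hx₀
          have h2 := hu'.2 x₀ hx₀
          rw [smul_sub_apply] at h1 h2
          nlinarith
        have hth : Theta0 J φ ψ = ((Real.log (b * s) : ℝ) : EReal) := by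
          rw [theta0_eq_coe hβ₁pos hβ₂pos hβ₁top hβ₂top, ← hbdef, ← hsdef]
        rw [hth, ← EReal.coe_mul]
        have hRHS0 : (0 : EReal) ≤ ((lam * Real.log (b * s) : ℝ) : EReal) := by
          rw [← EReal.coe_zero]
          exact EReal.coe_le_coe_iff.2 (mul_nonneg hlam0 (Real.log_nonneg hbs1))
        obtain ⟨a, hadef⟩ : ∃ a : ℝ, a = s⁻¹ := ⟨_, rfl⟩
        have hapos : 0 < a := hadef ▸ inv_pos.2 hspos
        have hab : a ≤ b := by
          rw [hadef, inv_le_iff_one_le_mul₀' hspos]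
          linarith [hbs1]
        by_cases huz : ∃ x ∈ J, (ψ - a • φ) x ≠ 0
        · by_cases hvz : ∃ x ∈ J, (b • φ - ψ) x ≠ 0
          · -- main case
            have humem : (ψ - a • φ) ∈ V0 J := by
              refine ⟨hψ.1.sub (hφ.1.smul a), fun x hx => ?_⟩
              have h2 := hu'.2 x hx
              rw [smul_sub_apply] at h2
              have he : (ψ - a • φ) x = ψ x - a * φ x := rfl
              rw [he, hadef]
              have hs' : φ x ≤ s * ψ x := by linarith
              have h3 := mul_le_mul_of_nonneg_left hs' (inv_pos.2 hspos).le
              rw [inv_mul_cancel_left₀ hspos.ne'] at h3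
              linarith
            have hPu := hP _ humem huz
            have hPv := hP _ hv hvz
            have hDuv : Theta0 J (P (ψ - a • φ)) (P (b • φ - ψ)) ≤ ((DR : ℝ) : EReal) := by
              rw [hDcoe, hDSdef]
              exact le_sSup ⟨_, humem, huz, _, hv, hvz, rfl⟩
            have hβApos : 0 < beta0 J (P (b • φ - ψ)) (P (ψ - a • φ)) :=
              beta0_pos hx₀ (fun x hx => (hPu.2.1 x hx).le) (hPu.2.1 x₀ hx₀).ne'
            have hβBpos : 0 < beta0 J (P (ψ - a • φ)) (P (b • φ - ψ)) :=
              beta0_pos hx₀ (fun x hx => (hPv.2.1 x hx).le) (hPv.2.1 x₀ hx₀).ne'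
            have hprodne : beta0 J (P (ψ - a • φ)) (P (b • φ - ψ)) *
                beta0 J (P (b • φ - ψ)) (P (ψ - a • φ)) ≠ ⊤ := by
              intro h
              have h2 : Theta0 J (P (ψ - a • φ)) (P (b • φ - ψ)) = ⊤ := by
                rw [Theta0, h]; exact ENNReal.log_top
              rw [h2] at hDuv
              exact (EReal.coe_lt_top DR).not_ge hDuv
            have hβBtop : beta0 J (P (ψ - a • φ)) (P (b • φ - ψ)) ≠ ⊤ :=
              fun h => hprodne (by rw [h, ENNReal.top_mul hβApos.ne'])
            have hβAtop : beta0 J (P (b • φ - ψ)) (P (ψ - a • φ)) ≠ ⊤ :=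
              fun h => hprodne (by rw [h, ENNReal.mul_top hβBpos.ne'])
            obtain ⟨A, hAdef⟩ : ∃ A : ℝ,
              A = (beta0 J (P (b • φ - ψ)) (P (ψ - a • φ))).toReal := ⟨_, rfl⟩
            obtain ⟨B, hBdef⟩ : ∃ B : ℝ,
              B = (beta0 J (P (ψ - a • φ)) (P (b • φ - ψ))).toReal := ⟨_, rfl⟩
            have hApos : 0 < A := hAdef ▸ ENNReal.toReal_pos hβApos.ne' hβAtop
            have hBpos : 0 < B := hBdef ▸ ENNReal.toReal_pos hβBpos.ne' hβBtop
            have hAB : B * A ≤ Real.exp DR := by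
              have hthuv := theta0_eq_coe hβBpos hβApos hβBtop hβAtop
              rw [hthuv, ← hAdef, ← hBdef] at hDuv
              have h5 := EReal.coe_le_coe_iff.1 hDuv
              exact (Real.log_le_iff_le_exp (by positivity)).1 h5
            have hAmem : A • (P (b • φ - ψ)) - (P (ψ - a • φ)) ∈ V0 J := by
              rw [hAdef]
              exact beta0_attained hPv.1 hPu.1 (fun x hx => (hPu.2.1 x hx).le) hβAtop
            have hBmem : B • (P (ψ - a • φ)) - (P (b • φ - ψ)) ∈ V0 J := by
              rw [hBdef]
              exact beta0_attained hPu.1 hPv.1 (fun x hx => (hPv.2.1 x hx).le) hβBtop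
            have hPueq : ∀ x : ℝ, P (ψ - a • φ) x = P ψ x - a * P φ x := by
              intro x; rw [map_sub, LinearMap.map_smul]; rfl
            have hPveq : ∀ x : ℝ, P (b • φ - ψ) x = b * P φ x - P ψ x := by
              intro x; rw [map_sub, LinearMap.map_smul]; rfl
            have h1A : (0:ℝ) < 1 + A := by linarith
            have h1B : (0:ℝ) < b + a * B := by positivity
            have hgle : ∀ x ∈ J, P ψ x ≤ (a + A * b) / (1 + A) * P φ x := by
              intro x hx
              have h1 := hAmem.2 x hx
              rw [smul_sub_apply, hPueq, hPveq] at h1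
              rw [div_mul_eq_mul_div, le_div_iff₀ h1A]
              nlinarith
            have hfle : ∀ x ∈ J, P φ x ≤ (1 + B) / (b + a * B) * P ψ x := by
              intro x hx
              have h1 := hBmem.2 x hx
              rw [smul_sub_apply, hPueq, hPveq] at h1
              rw [div_mul_eq_mul_div, le_div_iff₀ h1B]
              nlinarith
            have hkey := theta0_le_of_sandwich hPφ.1 hPψ.1
              (by positivity : (0:ℝ) < (a + A * b) / (1 + A))
              (by positivity : (0:ℝ) < (1 + B) / (b + a * B)) hgle hfle
            refine hkey.trans (EReal.coe_le_coe_iff.2 ?_)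
            have hfin := pq_log_bound hapos hbpos hApos hBpos hρ1 hab hAB
            have hba : b / a = b * s := by rw [hadef, div_inv_eq_mul]
            rw [hba] at hfin
            rw [hlaminv]
            exact hfin
          · push_neg at hvz
            have heq : ∀ x ∈ J, ψ x = b * φ x := by
              intro x hx
              have h2 := hvz x hx
              have h3 : (b • φ - ψ) x = b * φ x - ψ x := rfl
              rw [h3] at h2; linarith
            exact (theta0_P_le_zero hJ hP hφ hφn hψ hψn hbpos heq).trans hRHS0
        · push_neg at huz
          have heq : ∀ x ∈ J, ψ x = a * φ x := by
            intro x hx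
            have h2 := huz x hx
            have h3 : (ψ - a • φ) x = ψ x - a * φ x := rfl
            rw [h3] at h2; linarith
          exact (theta0_P_le_zero hJ hP hφ hφn hψ hψn hapos heq).trans hRHS0
  · rw [Set.not_nonempty_iff_eq_empty] at hne
    have hD : imageDiam J P = ⊥ := by rw [hDSdef, hne, sSup_empty]
    have hDR : (imageDiam J P).toReal = 0 := by rw [hD]; rfl
    rw [hDR]
    simp only [neg_zero, Real.exp_zero, sub_self]
    refine ⟨⟨le_refl 0, one_pos⟩, by linarith, ?_⟩
    intro φ hφ hφn ψ hψ hψn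
    exact absurd (Set.nonempty_of_mem (show Theta0 J (P φ) (P ψ) ∈ DS from
      ⟨φ, hφ, hφn, ψ, hψ, hψn, rfl⟩)) (by rw [hne]; exact Set.not_nonempty_empty)
end
end

section
/- Let c ∈ (0, 1), let J, F, J₁ be measurable subsets of ℝ with J₁ ⊆ F, let ζ : J × ℝ → ℝ be a measurable kernel with ζ(x, y) > c for almost every x ∈ J and every y ∈ F and ζ < c⁻¹, and let g : J₁ → ℝ satisfy c < g < c⁻¹ on J₁. Define the normalized (projective) map 𝒫 sending a probability density ψ ∈ 𝒱₀(J) to the probability density on J₁ proportional to y ↦ g(y)·∫_J ζ(x, y)ψ(x) dx. Then for all probability densities ψ₁, ψ₂ ∈ 𝒱₀(J), Θ₀(𝒫ψ₁, 𝒫ψ₂) ≤ λ·Θ₀(ψ₁, ψ₂) with λ := 1 − c⁸ ∈ (0, 1), where Θ₀ is the extended Hilbert projective metric of 𝒱₀(J₁) on the image side and of 𝒱₀(J) on the source side. -/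
open MeasureTheory Set
open scoped ENNReal

noncomputable section

/-- The normalized (projective) filtering step: `ψ ↦` the probability density
on `J₁` proportional to `y ↦ g(y)·∫_J ζ(x,y) ψ(x) dx`. -/
def Pmap (ζ : ℝ → ℝ → ℝ) (g : ℝ → ℝ) (J J₁ : Set ℝ) (ψ : ℝ → ℝ) : ℝ → ℝ :=
  fun y => (g y * ∫ x in J, ζ x y * ψ x) /
    ∫ y' in J₁, g y' * ∫ x in J, ζ x y' * ψ x

/-!
Write `Lψ(y) = g(y) ∫_J ζ(x,y) ψ(x) dx`, so that `𝒫ψ = Lψ / ∫_{J₁} Lψ`. If `ψ₂ ≤ b₁ψ₁` and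
`ψ₁ ≤ b₂ψ₂` (the infima `β₀` are attained, so `b₁, b₂` can be the `β₀`'s), then `b₁ψ₁ - ψ₂` and
`b₂ψ₂ - ψ₁` are nonnegative densities of masses `b₁ - 1` and `b₂ - 1`, and the bounds on `ζ` and
`g` pin `L` of a density of mass `m` between `c²m` and `c⁻²m` on `J₁`. Comparing these pinched
quantities at two points `y, y'` gives, with `ρ = c⁸` and `K = b₁b₂`, the cross-ratio bound
`Lψ₂(y) Lψ₁(y') (1 + ρK) ≤ (K + ρ) Lψ₁(y) Lψ₂(y')`, and by Bernoulli's inequality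
`(K + ρ) / (1 + ρK) ≤ K ^ (1 - ρ)`; hence `Θ₀(𝒫ψ₁, 𝒫ψ₂) ≤ (1 - ρ) log K`.
When `J₁` has measure `0` or `∞` the normalizing integral is `0` (a junk value when `∞`), so
`𝒫ψ = 0` and the left side is `log 0 = ⊥`.
-/

theorem add_le_rpow_mul_one_add_mul {K ρ : ℝ} (hK : 1 ≤ K) (hρ₀ : 0 ≤ ρ) (hρ₁ : ρ ≤ 1) :
    K + ρ ≤ K ^ (1 - ρ) * (1 + ρ * K) := by
  have hK₀ : 0 < K := zero_lt_one.trans_le hK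
  have hbernoulli : K ^ ρ ≤ 1 + ρ * (K - 1) := by
    simpa using rpow_one_add_le_one_add_mul_self (s := K - 1) (by linarith) hρ₀ hρ₁
  have hsplit : K ^ (1 - ρ) * K ^ ρ = K := by
    rw [← Real.rpow_add hK₀, sub_add_cancel, Real.rpow_one]
  have hpos : 0 < K ^ ρ := Real.rpow_pos_of_pos hK₀ ρ
  -- multiply the goal by `K ^ ρ` and use Bernoulli: `(K + ρ) (1 + ρ (K - 1)) ≤ K (1 + ρ K)`
  refine le_of_mul_le_mul_right ?_ hpos
  rw [mul_right_comm, hsplit]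
  nlinarith [mul_nonneg (mul_nonneg hρ₀ (sub_nonneg.2 hρ₁)) (sub_nonneg.2 hK)]

theorem pow_four_mul_mul_le_mul_of_mem_Icc {κ I I' u u' v v' : ℝ} (hκ : 0 < κ)
    (hu : u ∈ Icc (κ * I) (κ⁻¹ * I)) (hu' : u' ∈ Icc (κ * I) (κ⁻¹ * I))
    (hv : v ∈ Icc (κ * I') (κ⁻¹ * I')) (hv' : v' ∈ Icc (κ * I') (κ⁻¹ * I')) (hI : 0 ≤ I)
    (hI' : 0 ≤ I') : κ ^ 4 * (u' * v) ≤ u * v' := by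
  have hu'₀ : 0 ≤ u' := le_trans (by positivity) hu'.1
  have hv₀ : 0 ≤ v := le_trans (by positivity) hv.1
  calc κ ^ 4 * (u' * v) ≤ κ ^ 4 * ((κ⁻¹ * I) * (κ⁻¹ * I')) := by
        gcongr
        exacts [hu'.2, hv.2]
    _ = (κ * I) * (κ * I') := by field_simp
    _ ≤ u * v' := mul_le_mul hu.1 hv'.1 (by positivity) (le_trans (by positivity) hu.1)

section HilbertMetric

variable {S : Set ℝ} {φ ψ : ℝ → ℝ}

theorem beta0_le_ofReal {t : ℝ} (ht : 0 < t) (hφ : IntegrableOn φ S) (hψ : IntegrableOn ψ S)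
    (hle : ∀ y ∈ S, ψ y ≤ t * φ y) : beta0 S φ ψ ≤ ENNReal.ofReal t :=
  sInf_le ⟨t, ⟨ht, (hφ.smul t).sub hψ, fun y hy => sub_nonneg.2 (hle y hy)⟩, rfl⟩

theorem one_le_beta0 (hS : MeasurableSet S) (hφ : φ ∈ V0 S) (hψ : ψ ∈ V0 S)
    (hφ₁ : ∫ x in S, φ x = 1) (hψ₁ : ∫ x in S, ψ x = 1) : 1 ≤ beta0 S φ ψ := by
  refine le_sInf ?_
  rintro _ ⟨t, ⟨-, htφψ⟩, rfl⟩
  have hmass : 0 ≤ ∫ x in S, (t * φ x - ψ x) := setIntegral_nonneg hS htφψ.2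
  rw [integral_sub (hφ.1.const_mul t) hψ.1, integral_const_mul, hφ₁, hψ₁] at hmass
  exact ENNReal.one_le_ofReal.2 (by linarith)

theorem le_toReal_beta0_mul (hφ : φ ∈ V0 S) (hne : beta0 S φ ψ ≠ ⊤) {x : ℝ} (hx : x ∈ S) :
    ψ x ≤ (beta0 S φ ψ).toReal * φ x := by
  have hadm : ∀ t, t • φ - ψ ∈ V0 S → ψ x ≤ t * φ x := fun t ht => sub_nonneg.1 (ht.2 x hx)
  rcases (hφ.2 x hx).eq_or_lt with hφx | hφx
  · obtain ⟨_, ⟨t, ⟨-, ht⟩, rfl⟩, -⟩ := sInf_lt_iff.1 hne.lt_top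
    simpa [← hφx] using hadm t ht
  · rw [← div_le_iff₀ hφx, ← ENNReal.ofReal_le_iff_le_toReal hne]
    refine le_sInf ?_
    rintro _ ⟨t, ⟨-, ht⟩, rfl⟩
    exact ENNReal.ofReal_le_ofReal ((div_le_iff₀ hφx).2 (hadm t ht))

theorem beta0_zero : beta0 S 0 0 = 0 := by
  refine le_antisymm (ENNReal.le_of_forall_pos_le_add fun ε hε _ => ?_) bot_le
  have hzero : (0 : ℝ → ℝ) ∈ V0 S := ⟨integrableOn_zero, fun _ _ => le_rfl⟩
  calc beta0 S 0 0 ≤ ENNReal.ofReal ε := sInf_le ⟨ε, ⟨hε, by simpa using hzero⟩, rfl⟩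
    _ = 0 + ε := by simp

theorem Theta0_zero : Theta0 S 0 0 = ⊥ := by
  rw [Theta0, beta0_zero, zero_mul, ENNReal.log_zero]

theorem Theta0_eq_top (hφψ : 1 ≤ beta0 S φ ψ) (hψφ : 1 ≤ beta0 S ψ φ)
    (htop : beta0 S φ ψ = ⊤ ∨ beta0 S ψ φ = ⊤) : Theta0 S φ ψ = ⊤ := by
  rw [Theta0, ENNReal.mul_eq_top.2, ENNReal.log_top]
  exact htop.symm.imp (fun h => ⟨(zero_lt_one.trans_le hφψ).ne', h⟩)
    (fun h => ⟨h, (zero_lt_one.trans_le hψφ).ne'⟩)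

theorem Theta0_eq_log (hφψ : 1 ≤ beta0 S φ ψ) (hψφ : 1 ≤ beta0 S ψ φ)
    (hφψ' : beta0 S φ ψ ≠ ⊤) (hψφ' : beta0 S ψ φ ≠ ⊤) :
    Theta0 S φ ψ = Real.log ((beta0 S φ ψ).toReal * (beta0 S ψ φ).toReal) := by
  rw [Theta0, ENNReal.log_pos_real, ENNReal.toReal_mul]
  · exact mul_ne_zero (zero_lt_one.trans_le hφψ).ne' (zero_lt_one.trans_le hψφ).ne'
  · exact ENNReal.mul_ne_top hφψ' hψφ'

theorem Theta0_le_log_of_cross_le {R : ℝ} (hS : S.Nonempty) (hφ : IntegrableOn φ S)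
    (hψ : IntegrableOn ψ S) (hφ₀ : ∀ y ∈ S, 0 < φ y) (hψ₀ : ∀ y ∈ S, 0 < ψ y)
    (hR : ∀ y ∈ S, ∀ y' ∈ S, ψ y * φ y' ≤ R * (φ y * ψ y')) : Theta0 S φ ψ ≤ Real.log R := by
  obtain ⟨y₀, hy₀⟩ := hS
  set q : ℝ → ℝ := fun y => ψ y / φ y
  have hq₀ : ∀ y ∈ S, 0 < q y := fun y hy => div_pos (hψ₀ y hy) (hφ₀ y hy)
  have hcross : ∀ y ∈ S, ∀ y' ∈ S, q y ≤ R * q y' := by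
    intro y hy y' hy'
    rw [mul_div_assoc', div_le_div_iff₀ (hφ₀ y hy) (hφ₀ y' hy')]
    linear_combination hR y hy y' hy'
  have hR₀ : 0 < R := pos_of_mul_pos_left ((hq₀ y₀ hy₀).trans_le (hcross y₀ hy₀ y₀ hy₀))
    (hq₀ y₀ hy₀).le
  set m := sInf (q '' S)
  have hm_le : ∀ y ∈ S, m ≤ q y := fun y hy =>
    csInf_le ⟨0, by rintro _ ⟨y', hy', rfl⟩; exact (hq₀ y' hy').le⟩ ⟨y, hy, rfl⟩
  have hle_m : ∀ y ∈ S, q y / R ≤ m := fun y hy => le_csInf ⟨q y₀, y₀, hy₀, rfl⟩ <| by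
    rintro _ ⟨y', hy', rfl⟩
    exact (div_le_iff₀' hR₀).2 (hcross y hy y' hy')
  have hm₀ : 0 < m := (div_pos (hq₀ y₀ hy₀) hR₀).trans_le (hle_m y₀ hy₀)
  have hφψ : beta0 S φ ψ ≤ ENNReal.ofReal (R * m) := by
    refine beta0_le_ofReal (by positivity) hφ hψ fun y hy => ?_
    exact (div_le_iff₀ (hφ₀ y hy)).1 ((div_le_iff₀' hR₀).1 (hle_m y hy))
  have hψφ : beta0 S ψ φ ≤ ENNReal.ofReal m⁻¹ := by
    refine beta0_le_ofReal (by positivity) hψ hφ fun y hy => ?_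
    rw [inv_mul_eq_div, le_div_iff₀ hm₀, mul_comm, ← le_div_iff₀ (hφ₀ y hy)]
    exact hm_le y hy
  calc Theta0 S φ ψ ≤ ENNReal.log (ENNReal.ofReal (R * m) * ENNReal.ofReal m⁻¹) :=
        ENNReal.log_monotone (mul_le_mul' hφψ hψφ)
    _ = Real.log R := by
      rw [← ENNReal.ofReal_mul (by positivity), mul_inv_cancel_right₀ hm₀.ne',
        ENNReal.log_ofReal_of_pos hR₀]

end HilbertMetric

theorem integrable_mul_of_ae_mem_Icc {α : Type*} [MeasurableSpace α] {μ : Measure α}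
    {k ψ : α → ℝ} {a b : ℝ} (hk : AEStronglyMeasurable k μ) (hkab : ∀ᵐ x ∂μ, k x ∈ Icc a b)
    (hψ : Integrable ψ μ) : Integrable (fun x => k x * ψ x) μ :=
  hψ.bdd_mul hk (hkab.mono fun _ hx => abs_le_max_abs_abs hx.1 hx.2)

theorem integral_mul_mem_Icc {α : Type*} [MeasurableSpace α] {μ : Measure α}
    {k ψ : α → ℝ} {a b : ℝ} (hk : AEStronglyMeasurable k μ) (hkab : ∀ᵐ x ∂μ, k x ∈ Icc a b)
    (hψ : Integrable ψ μ) (hψ₀ : 0 ≤ᵐ[μ] ψ) :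
    ∫ x, k x * ψ x ∂μ ∈ Icc (a * ∫ x, ψ x ∂μ) (b * ∫ x, ψ x ∂μ) := by
  have hkψ := integrable_mul_of_ae_mem_Icc hk hkab hψ
  rw [← integral_const_mul, ← integral_const_mul]
  constructor
  · refine integral_mono_ae (hψ.const_mul a) hkψ ?_
    filter_upwards [hkab, hψ₀] with x hx hx₀ using mul_le_mul_of_nonneg_right hx.1 hx₀
  · refine integral_mono_ae hkψ (hψ.const_mul b) ?_
    filter_upwards [hkab, hψ₀] with x hx hx₀ using mul_le_mul_of_nonneg_right hx.2 hx₀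

def Lmap (ζ : ℝ → ℝ → ℝ) (g : ℝ → ℝ) (J : Set ℝ) (ψ : ℝ → ℝ) (y : ℝ) : ℝ :=
  g y * ∫ x in J, ζ x y * ψ x

theorem Pmap_eq_div (ζ : ℝ → ℝ → ℝ) (g : ℝ → ℝ) (J J₁ : Set ℝ) (ψ : ℝ → ℝ) :
    Pmap ζ g J J₁ ψ = fun y => Lmap ζ g J ψ y / ∫ y' in J₁, Lmap ζ g J ψ y' :=
  rfl

section Lmap

variable {c : ℝ} {J F J₁ : Set ℝ} {ζ : ℝ → ℝ → ℝ} {g ψ ψ' : ℝ → ℝ} {y : ℝ}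

theorem aestronglyMeasurable_kernel (hζmeas : Measurable (Function.uncurry ζ)) (y : ℝ) :
    AEStronglyMeasurable (fun x => ζ x y) (volume.restrict J) :=
  (hζmeas.comp measurable_prodMk_right).aestronglyMeasurable

theorem ae_kernel_mem_Icc (hζ_lb : ∀ᵐ x ∂(volume.restrict J), ∀ y ∈ F, c < ζ x y)
    (hζ_ub : ∀ x y, ζ x y < c⁻¹) (hy : y ∈ F) :
    ∀ᵐ x ∂(volume.restrict J), ζ x y ∈ Icc c c⁻¹ :=
  hζ_lb.mono fun x hx => ⟨(hx y hy).le, (hζ_ub x y).le⟩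

theorem Lmap_mul_sub (hζmeas : Measurable (Function.uncurry ζ))
    (hζ_lb : ∀ᵐ x ∂(volume.restrict J), ∀ y ∈ F, c < ζ x y) (hζ_ub : ∀ x y, ζ x y < c⁻¹)
    (hψ : IntegrableOn ψ J) (hψ' : IntegrableOn ψ' J) (hy : y ∈ F) (b : ℝ) :
    Lmap ζ g J (fun x => b * ψ x - ψ' x) y = b * Lmap ζ g J ψ y - Lmap ζ g J ψ' y := by
  have hint : ∀ φ, IntegrableOn φ J → IntegrableOn (fun x => ζ x y * φ x) J := fun φ hφ =>
    integrable_mul_of_ae_mem_Icc (aestronglyMeasurable_kernel hζmeas y)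
      (ae_kernel_mem_Icc hζ_lb hζ_ub hy) hφ
  have hsplit : (fun x => ζ x y * (b * ψ x - ψ' x)) =
      fun x => b * (ζ x y * ψ x) - ζ x y * ψ' x := by
    ext x; ring
  rw [Lmap, hsplit, integral_sub ((hint ψ hψ).const_mul b) (hint ψ' hψ'), integral_const_mul,
    Lmap, Lmap]
  ring

theorem Lmap_mem_Icc (hc : 0 < c) (hJ : MeasurableSet J) (hJ₁F : J₁ ⊆ F)
    (hζmeas : Measurable (Function.uncurry ζ))
    (hζ_lb : ∀ᵐ x ∂(volume.restrict J), ∀ y ∈ F, c < ζ x y) (hζ_ub : ∀ x y, ζ x y < c⁻¹)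
    (hg : ∀ y ∈ J₁, c < g y ∧ g y < c⁻¹) (hψ : ψ ∈ V0 J) (hy : y ∈ J₁) :
    Lmap ζ g J ψ y ∈ Icc (c ^ 2 * ∫ x in J, ψ x) ((c ^ 2)⁻¹ * ∫ x in J, ψ x) := by
  obtain ⟨hlow, hupp⟩ := integral_mul_mem_Icc (aestronglyMeasurable_kernel hζmeas y)
    (ae_kernel_mem_Icc hζ_lb hζ_ub (hJ₁F hy)) hψ.1 (ae_restrict_of_forall_mem hJ hψ.2)
  have hmass : 0 ≤ ∫ x in J, ψ x := setIntegral_nonneg hJ hψ.2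
  obtain ⟨hgl, hgu⟩ := hg y hy
  constructor
  · calc c ^ 2 * ∫ x in J, ψ x = c * (c * ∫ x in J, ψ x) := by ring
      _ ≤ g y * ∫ x in J, ζ x y * ψ x := mul_le_mul hgl.le hlow (by positivity) (by linarith)
  · calc g y * ∫ x in J, ζ x y * ψ x ≤ c⁻¹ * (c⁻¹ * ∫ x in J, ψ x) :=
          mul_le_mul hgu.le hupp ((mul_nonneg hc.le hmass).trans hlow) (by positivity)
      _ = (c ^ 2)⁻¹ * ∫ x in J, ψ x := by ring

theorem mul_Lmap_sub_Lmap_mem_Icc (hc : 0 < c) (hJ : MeasurableSet J) (hJ₁F : J₁ ⊆ F)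
    (hζmeas : Measurable (Function.uncurry ζ))
    (hζ_lb : ∀ᵐ x ∂(volume.restrict J), ∀ y ∈ F, c < ζ x y) (hζ_ub : ∀ x y, ζ x y < c⁻¹)
    (hg : ∀ y ∈ J₁, c < g y ∧ g y < c⁻¹) (hψ : ψ ∈ V0 J) (hψ' : ψ' ∈ V0 J)
    (hψ₁ : ∫ x in J, ψ x = 1) (hψ'₁ : ∫ x in J, ψ' x = 1) {b : ℝ}
    (hb : ∀ x ∈ J, ψ' x ≤ b * ψ x) (hy : y ∈ J₁) :
    b * Lmap ζ g J ψ y - Lmap ζ g J ψ' y ∈ Icc (c ^ 2 * (b - 1)) ((c ^ 2)⁻¹ * (b - 1)) := by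
  have hV : (fun x => b * ψ x - ψ' x) ∈ V0 J :=
    ⟨(hψ.1.const_mul b).sub hψ'.1, fun x hx => sub_nonneg.2 (hb x hx)⟩
  have hmass : ∫ x in J, (b * ψ x - ψ' x) = b - 1 := by
    rw [integral_sub (hψ.1.const_mul b) hψ'.1, integral_const_mul, hψ₁, hψ'₁, mul_one]
  rw [← Lmap_mul_sub hζmeas hζ_lb hζ_ub hψ.1 hψ'.1 (hJ₁F hy), ← hmass]
  exact Lmap_mem_Icc hc hJ hJ₁F hζmeas hζ_lb hζ_ub hg hV hy

theorem integrableOn_Lmap (hc : 0 < c) (hJ : MeasurableSet J) (hJ₁ : MeasurableSet J₁)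
    (hvol : volume J₁ ≠ ⊤) (hJ₁F : J₁ ⊆ F) (hζmeas : Measurable (Function.uncurry ζ))
    (hζ_lb : ∀ᵐ x ∂(volume.restrict J), ∀ y ∈ F, c < ζ x y) (hζ_ub : ∀ x y, ζ x y < c⁻¹)
    (hgmeas : Measurable g) (hg : ∀ y ∈ J₁, c < g y ∧ g y < c⁻¹) (hψ : ψ ∈ V0 J) :
    IntegrableOn (Lmap ζ g J ψ) J₁ := by
  have hmeas : AEStronglyMeasurable (Lmap ζ g J ψ) volume :=
    hgmeas.aestronglyMeasurable.mul
      ((hζmeas.comp measurable_swap).aestronglyMeasurable.mul hψ.1.1.comp_snd).integral_prod_right'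
  refine Measure.integrableOn_of_bounded hvol hmeas (M := (c ^ 2)⁻¹ * ∫ x in J, ψ x)
    (ae_restrict_of_forall_mem hJ₁ fun y hy => ?_)
  have hL := Lmap_mem_Icc hc hJ hJ₁F hζmeas hζ_lb hζ_ub hg hψ hy
  rw [Real.norm_eq_abs, abs_of_nonneg ((mul_nonneg (by positivity)
    (setIntegral_nonneg hJ hψ.2)).trans hL.1)]
  exact hL.2

theorem integral_Lmap_pos (hc : 0 < c) (hJ : MeasurableSet J) (hJ₁ : MeasurableSet J₁)
    (hvol₀ : volume J₁ ≠ 0) (hvol : volume J₁ ≠ ⊤) (hJ₁F : J₁ ⊆ F)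
    (hζmeas : Measurable (Function.uncurry ζ))
    (hζ_lb : ∀ᵐ x ∂(volume.restrict J), ∀ y ∈ F, c < ζ x y) (hζ_ub : ∀ x y, ζ x y < c⁻¹)
    (hgmeas : Measurable g) (hg : ∀ y ∈ J₁, c < g y ∧ g y < c⁻¹) (hψ : ψ ∈ V0 J)
    (hψ₁ : ∫ x in J, ψ x = 1) : 0 < ∫ y in J₁, Lmap ζ g J ψ y := by
  have hlow : ∀ y ∈ J₁, c ^ 2 ≤ Lmap ζ g J ψ y := fun y hy => by
    simpa [hψ₁] using (Lmap_mem_Icc hc hJ hJ₁F hζmeas hζ_lb hζ_ub hg hψ hy).1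
  have hpos : 0 < volume.real J₁ • c ^ 2 :=
    smul_pos (ENNReal.toReal_pos hvol₀ hvol) (by positivity)
  exact hpos.trans_le <| setIntegral_ge_of_const_le hJ₁ hvol hlow <|
    integrableOn_Lmap hc hJ hJ₁ hvol hJ₁F hζmeas hζ_lb hζ_ub hgmeas hg hψ

theorem integral_Lmap_eq_zero (hc : 0 < c) (hJ : MeasurableSet J)
    (hvol : volume J₁ = 0 ∨ volume J₁ = ⊤) (hJ₁F : J₁ ⊆ F)
    (hζmeas : Measurable (Function.uncurry ζ))
    (hζ_lb : ∀ᵐ x ∂(volume.restrict J), ∀ y ∈ F, c < ζ x y) (hζ_ub : ∀ x y, ζ x y < c⁻¹)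
    (hg : ∀ y ∈ J₁, c < g y ∧ g y < c⁻¹) (hψ : ψ ∈ V0 J) (hψ₁ : ∫ x in J, ψ x = 1) :
    ∫ y in J₁, Lmap ζ g J ψ y = 0 := by
  rcases hvol with hvol₀ | hvol
  · rw [Measure.restrict_eq_zero.2 hvol₀, integral_zero_measure]
  -- `Lmap ψ ≥ c ^ 2` on `J₁`, which has infinite measure, so the integral is the junk value `0`
  refine integral_undef fun hint => (hint.measure_ge_lt_top (pow_pos hc 2)).ne (top_unique ?_)
  calc ⊤ = volume.restrict J₁ J₁ := by rw [Measure.restrict_apply_self, hvol]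
    _ ≤ _ := measure_mono fun y hy => by
      simpa [hψ₁] using (Lmap_mem_Icc hc hJ hJ₁F hζmeas hζ_lb hζ_ub hg hψ hy).1

end Lmap

theorem Theta0_Pmap_le {c : ℝ} {J F J₁ : Set ℝ} {ζ : ℝ → ℝ → ℝ} {g ψ₁ ψ₂ : ℝ → ℝ} {b₁ b₂ : ℝ}
    (hc₀ : 0 < c) (hc₁ : c ≤ 1) (hJ : MeasurableSet J) (hJ₁ : MeasurableSet J₁)
    (hvol₀ : volume J₁ ≠ 0) (hvol : volume J₁ ≠ ⊤) (hJ₁F : J₁ ⊆ F)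
    (hζmeas : Measurable (Function.uncurry ζ))
    (hζ_lb : ∀ᵐ x ∂(volume.restrict J), ∀ y ∈ F, c < ζ x y) (hζ_ub : ∀ x y, ζ x y < c⁻¹)
    (hgmeas : Measurable g) (hg : ∀ y ∈ J₁, c < g y ∧ g y < c⁻¹)
    (hψ₁ : ψ₁ ∈ V0 J) (hψ₂ : ψ₂ ∈ V0 J) (hψ₁_prob : ∫ x in J, ψ₁ x = 1)
    (hψ₂_prob : ∫ x in J, ψ₂ x = 1) (hb₁ : 1 ≤ b₁) (hb₂ : 1 ≤ b₂)
    (h₁₂ : ∀ x ∈ J, ψ₂ x ≤ b₁ * ψ₁ x) (h₂₁ : ∀ x ∈ J, ψ₁ x ≤ b₂ * ψ₂ x) :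
    Theta0 J₁ (Pmap ζ g J J₁ ψ₁) (Pmap ζ g J J₁ ψ₂) ≤ ((1 - c ^ 8) * Real.log (b₁ * b₂) : ℝ) := by
  rw [Pmap_eq_div, Pmap_eq_div]
  set f := Lmap ζ g J ψ₁
  set h := Lmap ζ g J ψ₂
  set K := b₁ * b₂
  have hK : 1 ≤ K := one_le_mul_of_one_le_of_one_le hb₁ hb₂
  have hf : ∀ y ∈ J₁, f y ∈ Icc (c ^ 2 * 1) ((c ^ 2)⁻¹ * 1) := fun y hy => by
    simpa only [hψ₁_prob] using Lmap_mem_Icc hc₀ hJ hJ₁F hζmeas hζ_lb hζ_ub hg hψ₁ hy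
  have hh₀ : ∀ y ∈ J₁, 0 < h y := fun y hy => by
    have := (Lmap_mem_Icc hc₀ hJ hJ₁F hζmeas hζ_lb hζ_ub hg hψ₂ hy).1
    rw [hψ₂_prob, mul_one] at this
    exact (pow_pos hc₀ 2).trans_le this
  have hA : ∀ y ∈ J₁, b₁ * f y - h y ∈ Icc (c ^ 2 * (b₁ - 1)) ((c ^ 2)⁻¹ * (b₁ - 1)) :=
    fun y hy => mul_Lmap_sub_Lmap_mem_Icc hc₀ hJ hJ₁F hζmeas hζ_lb hζ_ub hg hψ₁ hψ₂
      hψ₁_prob hψ₂_prob h₁₂ hy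
  have hB : ∀ y ∈ J₁, b₂ * h y - f y ∈ Icc (c ^ 2 * (b₂ - 1)) ((c ^ 2)⁻¹ * (b₂ - 1)) :=
    fun y hy => mul_Lmap_sub_Lmap_mem_Icc hc₀ hJ hJ₁F hζmeas hζ_lb hζ_ub hg hψ₂ hψ₁
      hψ₂_prob hψ₁_prob h₂₁ hy
  have hcross : ∀ y ∈ J₁, ∀ y' ∈ J₁, h y * f y' ≤ K ^ (1 - c ^ 8) * (f y * h y') := by
    intro y hy y' hy'
    have hA' := pow_four_mul_mul_le_mul_of_mem_Icc (pow_pos hc₀ 2) (hA y hy) (hA y' hy')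
      (hf y hy) (hf y' hy') (by linarith) zero_le_one
    have hB' := pow_four_mul_mul_le_mul_of_mem_Icc (pow_pos hc₀ 2) (hB y' hy') (hB y hy)
      (hf y' hy') (hf y hy) (by linarith) zero_le_one
    have hρ : c ^ 8 ≤ 1 := pow_le_one₀ hc₀.le hc₁
    have hfh : 0 ≤ f y * h y' := mul_nonneg (le_trans (by positivity) (hf y hy).1) (hh₀ y' hy').le
    refine le_of_mul_le_mul_right ?_ (by positivity : 0 < 1 + c ^ 8 * K)
    calc h y * f y' * (1 + c ^ 8 * K) ≤ (K + c ^ 8) * (f y * h y') := by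
          linear_combination hA' + b₁ * hB'
      _ ≤ K ^ (1 - c ^ 8) * (1 + c ^ 8 * K) * (f y * h y') :=
          mul_le_mul_of_nonneg_right (add_le_rpow_mul_one_add_mul hK (by positivity) hρ) hfh
      _ = K ^ (1 - c ^ 8) * (f y * h y') * (1 + c ^ 8 * K) := by ring
  have hD₁ := integral_Lmap_pos hc₀ hJ hJ₁ hvol₀ hvol hJ₁F hζmeas hζ_lb hζ_ub hgmeas hg hψ₁
    hψ₁_prob
  have hD₂ := integral_Lmap_pos hc₀ hJ hJ₁ hvol₀ hvol hJ₁F hζmeas hζ_lb hζ_ub hgmeas hg hψ₂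
    hψ₂_prob
  calc Theta0 J₁ (fun y => f y / ∫ y' in J₁, f y') (fun y => h y / ∫ y' in J₁, h y')
      ≤ Real.log (K ^ (1 - c ^ 8)) := by
        refine Theta0_le_log_of_cross_le (nonempty_of_measure_ne_zero hvol₀)
          ((integrableOn_Lmap hc₀ hJ hJ₁ hvol hJ₁F hζmeas hζ_lb hζ_ub hgmeas hg hψ₁).div_const _)
          ((integrableOn_Lmap hc₀ hJ hJ₁ hvol hJ₁F hζmeas hζ_lb hζ_ub hgmeas hg hψ₂).div_const _)
          (fun y hy => div_pos ((pow_pos hc₀ 2).trans_le (by simpa using (hf y hy).1)) hD₁)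
          (fun y hy => div_pos (hh₀ y hy) hD₂) fun y hy y' hy' => ?_
        rw [div_mul_div_comm, div_mul_div_comm, mul_comm (∫ y', h y' ∂_), mul_div_assoc']
        exact div_le_div_of_nonneg_right (hcross y hy y' hy') (by positivity)
    _ = ((1 - c ^ 8) * Real.log K : ℝ) := by rw [Real.log_rpow (by positivity)]

theorem filtering_step_contracts_general
    (c : ℝ) (hc : c ∈ Set.Ioo (0:ℝ) 1)
    (J F J₁ : Set ℝ) (hJ : MeasurableSet J)
    (hJ₁ : MeasurableSet J₁) (hJ₁F : J₁ ⊆ F)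
    (ζ : ℝ → ℝ → ℝ) (hζmeas : Measurable (Function.uncurry ζ))
    (hζ_lb : ∀ᵐ x ∂(volume.restrict J), ∀ y ∈ F, c < ζ x y)
    (hζ_ub : ∀ x y, ζ x y < c⁻¹)
    (g : ℝ → ℝ) (hgmeas : Measurable g)
    (hg : ∀ y ∈ J₁, c < g y ∧ g y < c⁻¹)
    (ψ₁ ψ₂ : ℝ → ℝ) (hψ₁ : ψ₁ ∈ V0 J) (hψ₂ : ψ₂ ∈ V0 J)
    (hψ₁_prob : ∫ x in J, ψ₁ x = 1) (hψ₂_prob : ∫ x in J, ψ₂ x = 1) :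
    (1 - c ^ 8) ∈ Set.Ioo (0:ℝ) 1 ∧
    Theta0 J₁ (Pmap ζ g J J₁ ψ₁) (Pmap ζ g J J₁ ψ₂)
      ≤ ((1 - c ^ 8 : ℝ) : EReal) * Theta0 J ψ₁ ψ₂ := by
  obtain ⟨hc₀, hc₁⟩ := hc
  have hc₈ : c ^ 8 < 1 := pow_lt_one₀ hc₀.le hc₁ (by norm_num)
  refine ⟨⟨by linarith, by linarith [pow_pos hc₀ 8]⟩, ?_⟩
  by_cases hvol : volume J₁ = 0 ∨ volume J₁ = ⊤
  · have hP : ∀ ψ ∈ V0 J, ∫ x in J, ψ x = 1 → Pmap ζ g J J₁ ψ = 0 := fun ψ hψ hψ₁ => by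
      ext y
      simp [Pmap_eq_div, integral_Lmap_eq_zero hc₀ hJ hvol hJ₁F hζmeas hζ_lb hζ_ub hg hψ hψ₁]
    rw [hP ψ₁ hψ₁ hψ₁_prob, hP ψ₂ hψ₂ hψ₂_prob, Theta0_zero]
    exact bot_le
  push Not at hvol
  have hβ₁₂ := one_le_beta0 hJ hψ₁ hψ₂ hψ₁_prob hψ₂_prob
  have hβ₂₁ := one_le_beta0 hJ hψ₂ hψ₁ hψ₂_prob hψ₁_prob
  by_cases htop : beta0 J ψ₁ ψ₂ = ⊤ ∨ beta0 J ψ₂ ψ₁ = ⊤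
  · rw [Theta0_eq_top hβ₁₂ hβ₂₁ htop, EReal.coe_mul_top_of_pos (by linarith)]
    exact le_top
  push Not at htop
  rw [Theta0_eq_log hβ₁₂ hβ₂₁ htop.1 htop.2, ← EReal.coe_mul]
  exact Theta0_Pmap_le hc₀ hc₁.le hJ hJ₁ hvol.1 hvol.2 hJ₁F hζmeas hζ_lb hζ_ub hgmeas hg
    hψ₁ hψ₂ hψ₁_prob hψ₂_prob (by simpa using ENNReal.toReal_mono htop.1 hβ₁₂)
    (by simpa using ENNReal.toReal_mono htop.2 hβ₂₁) (fun _ => le_toReal_beta0_mul hψ₁ htop.1)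
    (fun _ => le_toReal_beta0_mul hψ₂ htop.2)

/-- the normalized filtering step contracts the Hilbert metric
`Θ₀` with rate `λ = 1 − c⁸ ∈ (0,1)` on probability densities. -/
theorem filtering_step_contracts
    (c : ℝ) (hc : c ∈ Set.Ioo (0:ℝ) 1)
    (J F J₁ : Set ℝ) (hJ : MeasurableSet J) (hF : MeasurableSet F)
    (hJ₁ : MeasurableSet J₁) (hJ₁F : J₁ ⊆ F)
    (ζ : ℝ → ℝ → ℝ) (hζmeas : Measurable (Function.uncurry ζ))
    (hζ_lb : ∀ᵐ x ∂(volume.restrict J), ∀ y ∈ F, c < ζ x y)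
    (hζ_ub : ∀ x y, ζ x y < c⁻¹)
    (g : ℝ → ℝ) (hgmeas : Measurable g)
    (hg : ∀ y ∈ J₁, c < g y ∧ g y < c⁻¹)
    (ψ₁ ψ₂ : ℝ → ℝ) (hψ₁ : ψ₁ ∈ V0 J) (hψ₂ : ψ₂ ∈ V0 J)
    (hψ₁_prob : ∫ x in J, ψ₁ x = 1) (hψ₂_prob : ∫ x in J, ψ₂ x = 1) :
    (1 - c ^ 8) ∈ Set.Ioo (0:ℝ) 1 ∧
    Theta0 J₁ (Pmap ζ g J J₁ ψ₁) (Pmap ζ g J J₁ ψ₂)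
      ≤ ((1 - c ^ 8 : ℝ) : EReal) * Theta0 J ψ₁ ψ₂ :=
  filtering_step_contracts_general c hc J F J₁ hJ hJ₁ hJ₁F ζ hζmeas hζ_lb hζ_ub g hgmeas hg ψ₁ ψ₂
    hψ₁ hψ₂ hψ₁_prob hψ₂_prob
end
end
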